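/- arXiv:math-ph/0611084 — 5 statements merged into one kernel-verified Lean document; each statement's English description precedes it below -/
import Mathlib

section
/- For b in the Lie algebra t of the maximal torus, the determinant of (1 - exp(ad(b))) restricted to the orthogonal complement t^⊥ of t in g equals ∏_{α ∈ R₊} 4 sin²(π(α,b)). In particular it equals ∏_{α∈R₊}(1 - e^{2πiα(b)})(1 - e^{-2πiα(b)}). -/
open scoped RealInnerProductSpace

theorem LinearMap.det_eq_prod_of_basis_eigen {R M ι : Type*} [CommRing R] [AddCommGroup M]
    [Module R M] [Fintype ι] [DecidableEq ι] (B : Module.Basis ι R M) (f : M →ₗ[R] M)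
    (μ : ι → R) (hf : ∀ i, f (B i) = μ i • B i) :
    LinearMap.det f = ∏ i, μ i := by
  have hdiag : f = Matrix.toLin B B (Matrix.diagonal μ) :=
    B.ext fun j => by simp [hf, Matrix.toLin_self, Matrix.diagonal_apply]
  rw [hdiag, LinearMap.det_toLin, Matrix.det_diagonal]

theorem Complex.one_sub_exp_mul_one_sub_exp_neg (z : ℂ) :
    (1 - exp (2 * z * I)) * (1 - exp (-(2 * z * I))) = 4 * sin z ^ 2 := by
  have hcos : 2 * cos (2 * z) = exp (2 * z * I) + exp (-(2 * z * I)) := by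
    rw [two_cos, neg_mul]
  have hinv : exp (2 * z * I) * exp (-(2 * z * I)) = 1 := by
    rw [← exp_add, add_neg_cancel, exp_zero]
  linear_combination hinv + hcos - 2 * cos_two_mul_eq_one_sub z

theorem one_sub_exp_two_pi_I_mul_one_sub_exp_neg (x : ℝ) :
    (1 - Complex.exp (2 * (Real.pi : ℂ) * Complex.I * (x : ℂ))) *
      (1 - Complex.exp (-(2 * (Real.pi : ℂ) * Complex.I * (x : ℂ))))
    = ((4 * Real.sin (Real.pi * x) ^ 2 : ℝ) : ℂ) := by
  have harg : 2 * (Real.pi : ℂ) * Complex.I * x = 2 * ((Real.pi * x : ℝ) : ℂ) * Complex.I := by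
    push_cast; ring
  rw [harg, Complex.one_sub_exp_mul_one_sub_exp_neg]
  norm_cast

/-- The root-space decomposition of `t^⊥` is encoded by the eigenbasis `B` of `f = exp(ad b)`
on the complexification `V`. -/
theorem stmt_2_general {r n : ℕ} (b : EuclideanSpace ℝ (Fin r))
    (Rpos : Fin n → EuclideanSpace ℝ (Fin r))  -- the positive roots
    (V : Type*) [AddCommGroup V] [Module ℂ V]
    (f : Module.End ℂ V) (B : Module.Basis (Fin n ⊕ Fin n) ℂ V)
    (hpos : ∀ i, f (B (Sum.inl i)) =
      Complex.exp (2 * (Real.pi : ℂ) * Complex.I * ((⟪Rpos i, b⟫ : ℝ) : ℂ)) • B (Sum.inl i))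
    (hneg : ∀ i, f (B (Sum.inr i)) =
      Complex.exp (-(2 * (Real.pi : ℂ) * Complex.I * ((⟪Rpos i, b⟫ : ℝ) : ℂ))) • B (Sum.inr i)) :
    LinearMap.det ((1 - f : Module.End ℂ V) : V →ₗ[ℂ] V)
        = ∏ i : Fin n, ((4 * (Real.sin (Real.pi * ⟪Rpos i, b⟫)) ^ 2 : ℝ) : ℂ)
    ∧ LinearMap.det ((1 - f : Module.End ℂ V) : V →ₗ[ℂ] V)
        = ∏ i : Fin n,
            ((1 - Complex.exp (2 * (Real.pi : ℂ) * Complex.I * ((⟪Rpos i, b⟫ : ℝ) : ℂ))) *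
             (1 - Complex.exp (-(2 * (Real.pi : ℂ) * Complex.I * ((⟪Rpos i, b⟫ : ℝ) : ℂ))))) := by
  have hdet : LinearMap.det ((1 - f : Module.End ℂ V) : V →ₗ[ℂ] V)
      = ∏ i : Fin n,
          ((1 - Complex.exp (2 * (Real.pi : ℂ) * Complex.I * ((⟪Rpos i, b⟫ : ℝ) : ℂ))) *
           (1 - Complex.exp (-(2 * (Real.pi : ℂ) * Complex.I * ((⟪Rpos i, b⟫ : ℝ) : ℂ))))) := by
    rw [LinearMap.det_eq_prod_of_basis_eigen B _ (Sum.elim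
        (fun i => 1 - Complex.exp (2 * (Real.pi : ℂ) * Complex.I * ((⟪Rpos i, b⟫ : ℝ) : ℂ)))
        (fun i => 1 - Complex.exp (-(2 * (Real.pi : ℂ) * Complex.I * ((⟪Rpos i, b⟫ : ℝ) : ℂ)))))]
    · rw [Fintype.prod_sum_type, ← Finset.prod_mul_distrib]
      rfl
    · rintro (i | i) <;> simp [hpos, hneg, sub_smul]
  refine ⟨?_, hdet⟩
  rw [hdet]
  exact Finset.prod_congr rfl fun i _ => one_sub_exp_two_pi_I_mul_one_sub_exp_neg _

/-- For `b` in the Cartan subalgebra `t`, the determinant of `1 - exp(ad b)`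
on (the complexification `V` of) the orthogonal complement `t^⊥` equals
`∏_{α ∈ R₊} 4 sin²(π(α,b))`, and in particular equals
`∏_{α ∈ R₊} (1 - e^{2πiα(b)})(1 - e^{-2πiα(b)})`.  The root-space decomposition
of `t^⊥` is encoded by the eigenbasis `B` of `f = exp(ad b)`. -/
theorem stmt_2 {r n : ℕ} (b : EuclideanSpace ℝ (Fin r))
    (Rpos : Fin n → EuclideanSpace ℝ (Fin r))  -- the positive roots
    (V : Type*) [AddCommGroup V] [Module ℂ V] [FiniteDimensional ℂ V]
    (f : Module.End ℂ V) (B : Module.Basis (Fin n ⊕ Fin n) ℂ V)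
    (hpos : ∀ i, f (B (Sum.inl i)) =
      Complex.exp (2 * (Real.pi : ℂ) * Complex.I * ((⟪Rpos i, b⟫ : ℝ) : ℂ)) • B (Sum.inl i))
    (hneg : ∀ i, f (B (Sum.inr i)) =
      Complex.exp (-(2 * (Real.pi : ℂ) * Complex.I * ((⟪Rpos i, b⟫ : ℝ) : ℂ))) • B (Sum.inr i)) :
    LinearMap.det ((1 - f : Module.End ℂ V) : V →ₗ[ℂ] V)
        = ∏ i : Fin n, ((4 * (Real.sin (Real.pi * ⟪Rpos i, b⟫)) ^ 2 : ℝ) : ℂ)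
    ∧ LinearMap.det ((1 - f : Module.End ℂ V) : V →ₗ[ℂ] V)
        = ∏ i : Fin n,
            ((1 - Complex.exp (2 * (Real.pi : ℂ) * Complex.I * ((⟪Rpos i, b⟫ : ℝ) : ℂ))) *
             (1 - Complex.exp (-(2 * (Real.pi : ℂ) * Complex.I * ((⟪Rpos i, b⟫ : ℝ) : ℂ))))) :=
  stmt_2_general b Rpos V f B hpos hneg
end

section
/- With dim(λ) = S_{λ0}/S_{00}, v_λ = T_{λλ}, and fusion coefficients N^ν_{μλ} = ∑_σ S_{λσ}S_{μσ}S_{ν*σ}/S_{0σ}, one has the identity ∑_{λ∈Λ₊^k} dim(λ) T_{λλ} N^ν_{μλ} = (1/(T_{00}S_{00})) (TST)_{μν}. -/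
/-!
Write `T = diag(t)` and `C` for the permutation matrix of `λ ↦ λ*`. Since `C² = 1`, the relations
`S² = C = (ST)³` give `TSTST = S`. Read in row `0`, this says `t₀ (STS)_{0σ} t_σ = S_{0σ} ≠ 0`,
so every `t_σ` is invertible and `(STS)_{0σ} = S_{0σ} / (t₀ t_σ)`;
after exchanging the sums over `λ` and `σ` the left-hand side collapses to
`(S T⁻¹ S)_{μν*} / (t₀ S₀₀)`. Finally `S T⁻¹ = TSTS`, so `S T⁻¹ S = TST S² = TST C`,
whose `(μ, ν*)` entry is `(TST)_{μν}`.
-/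

open Matrix Finset

theorem mul_mul_mul_mul_eq_of_mul_pow_three {M : Type*} [Monoid M] {s t c : M}
    (hs : s * s = c) (hc : c * c = 1) (h : (s * t) ^ 3 = c) :
    t * s * t * s * t = s :=
  calc t * s * t * s * t = (c * c) * (t * s * t * s * t) := by rw [hc, one_mul]
    _ = s * c * (s * t) ^ 3 := by rw [← hs]; simp only [pow_succ, pow_zero, one_mul, mul_assoc]
    _ = s := by rw [h, mul_assoc, hc, mul_one]

namespace Matrix

variable {ι K : Type*} [Fintype ι] [DecidableEq ι]

section PermMatrix

variable {R : Type*} [NonAssocSemiring R] {f : ι → ι} {C : Matrix ι ι R}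

theorem mul_apply_of_eq_ite (hC : ∀ l m, C l m = if l = f m then 1 else 0)
    (M : Matrix ι ι R) (a b : ι) : (M * C) a b = M a (f b) := by
  simp [mul_apply, hC]

theorem mul_self_eq_one_of_eq_ite (hf : Function.Involutive f)
    (hC : ∀ l m, C l m = if l = f m then 1 else 0) : C * C = 1 := by
  ext a b
  rw [mul_apply_of_eq_ite hC, hC, hf b, one_apply]

end PermMatrix

variable [Field K] {S : Matrix ι ι K} {t : ι → K}

theorem ne_zero_of_diagonal_mul_mul_eq (hmod : diagonal t * S * diagonal t * S * diagonal t = S)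
    {a b : ι} (hab : S a b ≠ 0) : t b ≠ 0 := by
  intro htb
  apply hab
  rw [← hmod, mul_diagonal, htb, mul_zero]

theorem mul_diagonal_mul_apply_eq_div (hmod : diagonal t * S * diagonal t * S * diagonal t = S)
    (ht : ∀ s, t s ≠ 0) (a b : ι) : (S * diagonal t * S) a b = S a b / (t a * t b) := by
  have h : (diagonal t * (S * diagonal t * S) * diagonal t) a b = S a b := by
    conv_rhs => rw [← hmod]
    simp only [Matrix.mul_assoc]
  rw [mul_diagonal, diagonal_mul] at h
  rw [eq_div_iff (mul_ne_zero (ht a) (ht b)), ← h]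
  ring

theorem mul_diagonal_inv_mul_eq (hmod : diagonal t * S * diagonal t * S * diagonal t = S)
    (ht : ∀ s, t s ≠ 0) :
    S * diagonal t⁻¹ * S = diagonal t * S * diagonal t * (S * S) := by
  have hinv : diagonal t * diagonal t⁻¹ = 1 := by
    rw [diagonal_mul_diagonal, ← diagonal_one]
    exact congrArg diagonal (funext fun s => mul_inv_cancel₀ (ht s))
  calc S * diagonal t⁻¹ * S
      = diagonal t * S * diagonal t * S * diagonal t * diagonal t⁻¹ * S := by rw [hmod]
    _ = diagonal t * S * diagonal t * S * (diagonal t * diagonal t⁻¹) * S := by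
        simp only [Matrix.mul_assoc]
    _ = diagonal t * S * diagonal t * (S * S) := by
        rw [hinv, Matrix.mul_one]; simp only [Matrix.mul_assoc]

theorem sum_dim_mul_twist_mul_verlinde_eq (hsym : S.IsSymm) (z : ι) (hSz : ∀ s, S z s ≠ 0)
    (hmod : diagonal t * S * diagonal t * S * diagonal t = S) (m n : ι) :
    ∑ l, (S l z / S z z) * t l * ∑ s, S n s * S m s * S l s / S z s
      = (1 / (t z * S z z)) * (S * diagonal t⁻¹ * S) m n := by
  have ht : ∀ s, t s ≠ 0 := fun s => ne_zero_of_diagonal_mul_mul_eq hmod (hSz s)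
  have hrow (s : ι) : ∑ l, S z l * t l * S l s = S z s / (t z * t s) := by
    rw [← mul_diagonal_mul_apply_eq_div hmod ht, mul_apply]
    simp only [mul_diagonal]
  calc ∑ l, (S l z / S z z) * t l * ∑ s, S n s * S m s * S l s / S z s
      = ∑ s, S n s * S m s / (S z z * S z s) * ∑ l, S z l * t l * S l s := by
        simp_rw [mul_sum]
        rw [sum_comm]
        refine sum_congr rfl fun s _ => sum_congr rfl fun l _ => ?_
        rw [hsym.apply z l]
        ring
    _ = ∑ s, 1 / (t z * S z z) * (S m s * t⁻¹ s * S s n) := by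
        refine sum_congr rfl fun s _ => ?_
        rw [hrow, hsym.apply s n, Pi.inv_apply]
        field_simp [hSz s, hSz z, ht s, ht z]
    _ = (1 / (t z * S z z)) * (S * diagonal t⁻¹ * S) m n := by
        rw [← mul_sum, mul_apply]
        simp only [mul_diagonal]

end Matrix

theorem stmt_11_general {ι : Type*} [Fintype ι] [DecidableEq ι] (z : ι)
    (cstar : ι → ι) (hinv : Function.Involutive cstar)
    (S T C : Matrix ι ι ℂ)
    (hC : ∀ l m, C l m = if l = cstar m then 1 else 0)
    (hsym : S.IsSymm)
    (hmod1 : (S * T) ^ 3 = C) (hmod2 : S * S = C)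
    (hdiag : ∀ l m, l ≠ m → T l m = 0)
    (hSz : ∀ s, S z s ≠ 0)
    (N : ι → ι → ι → ℂ)
    (hN : ∀ l m n, N l m n = ∑ s, S l s * S m s * S n s / S z s)
    (Nup : ι → ι → ι → ℂ)
    (hNup : ∀ l m n, Nup l m n = N (cstar l) m n) :
    ∀ μ ν : ι, ∑ l, (S l z / S z z) * T l l * Nup ν μ l
      = (1 / (T z z * S z z)) * (T * S * T) μ ν := by
  intro μ ν
  obtain ⟨t, rfl⟩ : ∃ t, T = diagonal t := ⟨_, (IsDiag.diagonal_diag hdiag).symm⟩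
  have hmod : diagonal t * S * diagonal t * S * diagonal t = S :=
    mul_mul_mul_mul_eq_of_mul_pow_three hmod2 (mul_self_eq_one_of_eq_ite hinv hC) hmod1
  have ht : ∀ s, t s ≠ 0 := fun s => ne_zero_of_diagonal_mul_mul_eq hmod (hSz s)
  simp only [hNup, hN, diagonal_apply_eq]
  rw [sum_dim_mul_twist_mul_verlinde_eq hsym z hSz hmod, mul_diagonal_inv_mul_eq hmod ht, hmod2,
    mul_apply_of_eq_ite hC, hinv ν]

/-- With `dim(λ) = S_{λ0}/S_{00}`, `v_λ = T_{λλ}` and fusion coefficients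
`N^ν_{μλ} = ∑_σ S_{λσ}S_{μσ}S_{ν*σ}/S_{0σ}`, one has
`∑_{λ∈Λ₊^k} dim(λ) T_{λλ} N^ν_{μλ} = (1/(T_{00}S_{00})) (TST)_{μν}`,
where `S`, `T` are the modular matrices satisfying `(ST)³ = S² = C`. -/
theorem stmt_11 {ι : Type*} [Fintype ι] [DecidableEq ι] (z : ι)
    (cstar : ι → ι) (hinv : Function.Involutive cstar) (hzstar : cstar z = z)
    (S T C : Matrix ι ι ℂ)
    (hC : ∀ l m, C l m = if l = cstar m then 1 else 0)
    (hsym : S.IsSymm)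
    (hmod1 : (S * T) ^ 3 = C) (hmod2 : S * S = C)
    (hdiag : ∀ l m, l ≠ m → T l m = 0)
    (hTz : T z z ≠ 0) (hSz : ∀ s, S z s ≠ 0)
    (N : ι → ι → ι → ℂ)
    (hN : ∀ l m n, N l m n = ∑ s, S l s * S m s * S n s / S z s)
    (Nup : ι → ι → ι → ℂ)
    (hNup : ∀ l m n, Nup l m n = N (cstar l) m n) :
    ∀ μ ν : ι, ∑ l, (S l z / S z z) * T l l * Nup ν μ l
      = (1 / (T z z * S z z)) * (T * S * T) μ ν :=
  stmt_11_general z cstar hinv S T C hC hsym hmod1 hmod2 hdiag hSz N hN Nup hNup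
end

section
/- Assuming the modular relations (ST)³ = S² = C and the Verlinde formula N^{σ₀}_{λσ₂} = ∑_σ S_{λσ}S_{σ₂σ}S_{σ₀*σ}/S_{0σ}, one has ∑_{σ₂,σ₀ ∈ Λ₊^k} T_{σ₂σ₂} T_{σ₀σ₀}^{-1} S_{νσ₂} S_{μσ₀} N^{σ₀}_{λσ₂} = (T_{μμ}/T_{νν}) N_{λμν}. -/
/-!
Insert the Verlinde formula and sum over `σ₂, σ₀` first: for each `σ` the double sum factors as
`(S T S)_{νσ} (S T⁻¹ S⁻¹)_{μσ}`, where `S⁻¹ = S³ = C S` is what turns `S_{σ₀* σ}` into a matrix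
entry. The modular relations `(ST)³ = S² = C`, `C² = 1` give `TSTST = S`, hence
`S T S = T⁻¹ S T⁻¹` and `S T⁻¹ S⁻¹ = T S T`. As `T` is diagonal, the factors `T_{σσ}` cancel and
`T_{μμ} / T_{νν} · N_{λμν}` remains.
-/

open Matrix

section Monoid

variable {M : Type*} [Monoid M] {S T T' : M}

theorem tstst_eq_of_modular (hS : S ^ 4 = 1) (hST : (S * T) ^ 3 = S ^ 2) :
    T * S * T * S * T = S := by
  have h : S * (T * S * T * S * T) = S ^ 2 := by
    rw [← hST]; simp only [pow_succ, pow_zero, one_mul, mul_assoc]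
  calc T * S * T * S * T = S ^ 3 * (S * (T * S * T * S * T)) := by
        rw [← mul_assoc, ← pow_succ, hS, one_mul]
    _ = S := by rw [h, ← pow_add, pow_succ, hS, one_mul]

theorem sts_eq_of_modular (hS : S ^ 4 = 1) (hST : (S * T) ^ 3 = S ^ 2) (hT : T' * T = 1)
    (hT' : T * T' = 1) : S * T * S = T' * S * T' :=
  calc S * T * S = T' * T * (S * T * S) * (T * T') := by rw [hT, hT', one_mul, mul_one]
    _ = T' * (T * S * T * S * T) * T' := by simp only [mul_assoc]
    _ = T' * S * T' := by rw [tstst_eq_of_modular hS hST]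

theorem tst_eq_of_modular (hS : S ^ 4 = 1) (hST : (S * T) ^ 3 = S ^ 2) (hT' : T * T' = 1) :
    T * S * T = S * T' * S ^ 3 :=
  calc T * S * T = T * S * T * (S * (T * T') * S ^ 3) := by
        rw [hT', mul_one, ← pow_succ', hS, mul_one]
    _ = T * S * T * S * T * T' * S ^ 3 := by simp only [mul_assoc]
    _ = S * T' * S ^ 3 := by rw [tstst_eq_of_modular hS hST]

end Monoid

section Matrix

variable {ι K : Type*} [DecidableEq ι]

theorem eq_permMatrix_of_involutive [NonAssocSemiring K] {c : ι → ι}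
    (hc : Function.Involutive c) {C : Matrix ι ι K}
    (hC : ∀ l m, C l m = if l = c m then 1 else 0) : C = (hc.toPerm c).permMatrix K := by
  ext l m
  simp [PEquiv.toMatrix_apply, hC, hc.eq_iff]

variable [Fintype ι]

theorem Function.Involutive.permMatrix_mul_self [NonAssocSemiring K] {c : ι → ι}
    (hc : Function.Involutive c) :
    (hc.toPerm c).permMatrix K * (hc.toPerm c).permMatrix K = 1 := by
  rw [← permMatrix_mul, ← permMatrix_one]
  congr
  ext
  simp [hc _]

variable [Field K]

theorem diagonal_inv_mul_diagonal {d : ι → K} (hd : ∀ i, d i ≠ 0) :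
    diagonal d⁻¹ * diagonal d = 1 := by
  rw [diagonal_mul_diagonal, ← diagonal_one]
  exact congrArg diagonal (funext fun i => inv_mul_cancel₀ (hd i))

theorem diagonal_mul_diagonal_inv {d : ι → K} (hd : ∀ i, d i ≠ 0) :
    diagonal d * diagonal d⁻¹ = 1 := by
  rw [diagonal_mul_diagonal, ← diagonal_one]
  exact congrArg diagonal (funext fun i => mul_inv_cancel₀ (hd i))

theorem sum_sum_diagonal_mul_verlinde (S : Matrix ι ι K) (d : ι → K) (c : ι → ι)
    (z lam mu nu : ι) :
    ∑ s2, ∑ s0, d s2 * (d s0)⁻¹ * S nu s2 * S mu s0 *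
        ∑ s, S (c s0) s * S lam s * S s2 s / S z s
      = ∑ s, S lam s / S z s * (S * diagonal d * S) nu s *
          (S * diagonal d⁻¹ * S.submatrix c id) mu s := by
  simp only [mul_apply (M := S * _), mul_diagonal, submatrix_apply, id, Pi.inv_apply,
    Finset.mul_sum, Finset.sum_mul]
  rw [Finset.sum_comm_cycle]
  refine Finset.sum_congr rfl fun s _ => ?_
  rw [Finset.sum_comm]
  refine Finset.sum_congr rfl fun s0 _ => Finset.sum_congr rfl fun s2 _ => ?_
  ring

theorem sum_diagonal_conj_mul_verlinde (S : Matrix ι ι K) {d : ι → K} (hd : ∀ i, d i ≠ 0)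
    (z lam mu nu : ι) :
    ∑ s, S lam s / S z s * (diagonal d⁻¹ * S * diagonal d⁻¹) nu s *
        (diagonal d * S * diagonal d) mu s
      = d mu / d nu * ∑ s, S lam s * S mu s * S nu s / S z s := by
  rw [Finset.mul_sum]
  refine Finset.sum_congr rfl fun s _ => ?_
  simp only [diagonal_mul, mul_diagonal, Pi.inv_apply]
  field_simp [hd nu, hd s]

end Matrix

theorem stmt_12_general {ι : Type*} [Fintype ι] [DecidableEq ι] (z : ι)
    (cstar : ι → ι) (hinv : Function.Involutive cstar)
    (S T C : Matrix ι ι ℂ)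
    (hC : ∀ l m, C l m = if l = cstar m then 1 else 0)
    (hmod1 : (S * T) ^ 3 = C) (hmod2 : S * S = C)
    (hdiag : ∀ l m, l ≠ m → T l m = 0)
    (hTnz : ∀ l, T l l ≠ 0)
    (N : ι → ι → ι → ℂ)
    (hN : ∀ l m n, N l m n = ∑ s, S l s * S m s * S n s / S z s)
    (Nup : ι → ι → ι → ℂ)
    (hNup : ∀ l m n, Nup l m n = N (cstar l) m n) :
    ∀ lam mu nu : ι,
      ∑ s2, ∑ s0, T s2 s2 * (T s0 s0)⁻¹ * S nu s2 * S mu s0 * Nup s0 lam s2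
        = T mu mu / T nu nu * N lam mu nu := by
  intro lam mu nu
  obtain ⟨d, rfl⟩ : ∃ d, T = diagonal d :=
    ⟨T.diag, ((isDiag_iff_diagonal_diag T).1 hdiag).symm⟩
  simp only [diagonal_apply_eq] at hTnz ⊢
  rw [eq_permMatrix_of_involutive hinv hC] at hmod1 hmod2
  have hS4 : S ^ 4 = 1 := by
    rw [show S ^ 4 = S * S * (S * S) by simp only [pow_succ, pow_zero, one_mul, mul_assoc],
      hmod2, hinv.permMatrix_mul_self]
  have hS3 : S ^ 3 = S.submatrix cstar id := by
    rw [pow_succ, sq, hmod2, PEquiv.toMatrix_toPEquiv_mul]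
    rfl
  have hST : (S * diagonal d) ^ 3 = S ^ 2 := by rw [hmod1, sq, hmod2]
  simp only [hNup, hN]
  rw [sum_sum_diagonal_mul_verlinde, ← hS3,
    sts_eq_of_modular hS4 hST (diagonal_inv_mul_diagonal hTnz) (diagonal_mul_diagonal_inv hTnz),
    ← tst_eq_of_modular hS4 hST (diagonal_mul_diagonal_inv hTnz),
    sum_diagonal_conj_mul_verlinde S hTnz]

/-- Assuming the modular relations `(ST)³ = S² = C` and the Verlinde formula
`N^{σ₀}_{λσ₂} = ∑_σ S_{λσ}S_{σ₂σ}S_{σ₀*σ}/S_{0σ}`, one has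
`∑_{σ₂,σ₀} T_{σ₂σ₂} T_{σ₀σ₀}⁻¹ S_{νσ₂} S_{μσ₀} N^{σ₀}_{λσ₂}
  = (T_{μμ}/T_{νν}) N_{λμν}`. -/
theorem stmt_12 {ι : Type*} [Fintype ι] [DecidableEq ι] (z : ι)
    (cstar : ι → ι) (hinv : Function.Involutive cstar) (hzstar : cstar z = z)
    (S T C : Matrix ι ι ℂ)
    (hC : ∀ l m, C l m = if l = cstar m then 1 else 0)
    (hsym : S.IsSymm)
    (hmod1 : (S * T) ^ 3 = C) (hmod2 : S * S = C)
    (hdiag : ∀ l m, l ≠ m → T l m = 0)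
    (hTnz : ∀ l, T l l ≠ 0) (hSz : ∀ s, S z s ≠ 0)
    (N : ι → ι → ι → ℂ)
    (hN : ∀ l m n, N l m n = ∑ s, S l s * S m s * S n s / S z s)
    (Nup : ι → ι → ι → ℂ)
    (hNup : ∀ l m n, Nup l m n = N (cstar l) m n) :
    ∀ lam mu nu : ι,
      ∑ s2, ∑ s0, T s2 s2 * (T s0 s0)⁻¹ * S nu s2 * S mu s0 * Nup s0 lam s2
        = T mu mu / T nu nu * N lam mu nu :=
  stmt_12_general z cstar hinv S T C hC hmod1 hmod2 hdiag hTnz N hN Nup hNup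
end

section
/- For the shadow of the colored link in S²×S¹ consisting of three disjoint unknotted Jordan loops with colors λ, μ, ν, each winding once around S¹ and projecting to three disjoint circles in S² (so there are faces Y₁,Y₂,Y₃ with χ = gleam = 1 and an outer face Y₀ with χ = −1, gleam = −3), the state sum ∑_{σ₀,σ₁,σ₂,σ₃∈Λ₊^k} dim(σ₁)dim(σ₂)dim(σ₃)dim(σ₀)^{-1} N^{σ₀}_{σ₁λ}N^{σ₀}_{σ₂μ}N^{σ₀}_{σ₃ν} T_{σ₁σ₁}T_{σ₂σ₂}T_{σ₃σ₃}T_{σ₀σ₀}^{-3} equals (T_{λλ}T_{μμ}T_{νν}/(T_{00}³ S_{00}²)) · N_{λμν}. -/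
open Matrix Finset

/-! The relations `S² = C`, `(ST)³ = C`, `C² = 1` give `STS = T⁻¹ST⁻¹` and
`C·ST⁻¹S = TST`.
Inserting the Verlinde formula for `N`, the first relation collapses the sum over the middle
colour and the second evaluates what is left:
`∑_σ dim σ T_σσ N^b_{σa} = (TST)_{ba} / (T_00 S_00)`.
For fixed `σ₀` the state sum factors into three such sums, which leaves
`∑_{σ₀} S_{λσ₀} S_{μσ₀} S_{νσ₀} / S_{0σ₀} = N_{λμν}` up to the prefactor. -/

structure ModularRelations {M : Type*} [Monoid M] (S T C : M) : Prop where
  mul_self_S : S * S = C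
  pow_three : (S * T) ^ 3 = C
  mul_self_C : C * C = 1

namespace ModularRelations

variable {M : Type*} [Monoid M] {S C : M}

theorem commute_S {T : M} (h : ModularRelations S T C) : Commute C S := by
  rw [← h.mul_self_S]
  exact (Commute.refl S).mul_left (Commute.refl S)

theorem commute_T {T : M} (h : ModularRelations S T C) : Commute C T := by
  have hT : T = C * S * (S * T) := by
    rw [mul_assoc C, ← mul_assoc S, h.mul_self_S, ← mul_assoc, h.mul_self_C, one_mul]
  have hST : Commute C (S * T) := by
    rw [← h.pow_three]
    exact (Commute.refl _).pow_left 3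
  rw [hT]
  exact ((Commute.refl C).mul_right h.commute_S).mul_right hST

theorem TSTST_eq {T : M} (h : ModularRelations S T C) : T * S * T * S * T = S := by
  have hS : IsLeftRegular S := isLeftRegular_of_mul_eq_one (b := C * S) <| by
    rw [mul_assoc, h.mul_self_S, h.mul_self_C]
  apply hS
  change S * _ = S * S
  rw [h.mul_self_S, ← h.pow_three]
  simp only [pow_succ, pow_zero, one_mul, mul_assoc]

variable {T : Mˣ}

theorem STS_eq (h : ModularRelations S (T : M) C) : S * T * S = ↑T⁻¹ * S * ↑T⁻¹ := by
  calc S * T * S = ↑T⁻¹ * (T * S * T * S * T) * ↑T⁻¹ := by simp [mul_assoc]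
    _ = ↑T⁻¹ * S * ↑T⁻¹ := by rw [h.TSTST_eq]

theorem C_mul_STinvS_eq (h : ModularRelations S (T : M) C) :
    C * (S * ↑T⁻¹ * S) = T * S * T := by
  have hTST : Commute C (T * S * T) :=
    (h.commute_T.mul_right h.commute_S).mul_right h.commute_T
  calc C * (S * ↑T⁻¹ * S) = C * (T * S * T * S * T * ↑T⁻¹ * S) := by rw [h.TSTST_eq]
    _ = C * (T * S * T) * (S * S) := by simp [mul_assoc]
    _ = T * S * T * (C * C) := by rw [h.mul_self_S, hTST.eq, mul_assoc]
    _ = T * S * T := by rw [h.mul_self_C, mul_one]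

end ModularRelations

namespace Matrix

variable {ι : Type*} [Fintype ι] [DecidableEq ι]

theorem mul_apply_of_involutive {R : Type*} [NonAssocSemiring R] {c : ι → ι}
    (hc : Function.Involutive c) {C : Matrix ι ι R}
    (hC : ∀ l m, C l m = if l = c m then 1 else 0) (X : Matrix ι ι R) (l m : ι) :
    (C * X) l m = X (c l) m := by
  have hcl : ∀ k, l = c k ↔ k = c l := fun k => by rw [eq_comm, hc.eq_iff]
  simp [mul_apply, hC, hcl]

theorem mul_self_of_involutive {R : Type*} [NonAssocSemiring R] {c : ι → ι}
    (hc : Function.Involutive c) {C : Matrix ι ι R}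
    (hC : ∀ l m, C l m = if l = c m then 1 else 0) : C * C = 1 := by
  ext l m
  simp [mul_apply_of_involutive hc hC, hC, one_apply, hc.injective.eq_iff]

theorem mul_diagonal_mul_apply {R : Type*} [NonUnitalNonAssocSemiring R]
    (A B : Matrix ι ι R) (d : ι → R) (l m : ι) :
    (A * diagonal d * B) l m = ∑ s, A l s * d s * B s m := by
  rw [mul_apply]
  simp only [mul_diagonal]

variable {K : Type*} [Field K]

def diagonalUnit (t : ι → K) (ht : ∀ i, t i ≠ 0) : (Matrix ι ι K)ˣ where
  val := diagonal t
  inv := diagonal t⁻¹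
  val_inv := by simp [diagonal_mul_diagonal, ht]
  inv_val := by simp [diagonal_mul_diagonal, ht]

@[simp]
theorem coe_diagonalUnit (t : ι → K) (ht : ∀ i, t i ≠ 0) :
    (diagonalUnit t ht : Matrix ι ι K) = diagonal t := rfl

@[simp]
theorem coe_diagonalUnit_inv (t : ι → K) (ht : ∀ i, t i ≠ 0) :
    ((diagonalUnit t ht)⁻¹ : (Matrix ι ι K)ˣ) = diagonal t⁻¹ := rfl

variable {S C : Matrix ι ι K} {t : ι → K} {ht : ∀ i, t i ≠ 0}

theorem sum_qdim_mul_twist_mul_verlinde_eq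
    (h : ModularRelations S (diagonalUnit t ht : Matrix ι ι K) C)
    (hS : S.IsSymm) (z : ι) (hSz : ∀ s, S z s ≠ 0) (x y : ι) :
    ∑ σ, S σ z / S z z * t σ * ∑ s, S x s * S σ s * S y s / S z s
      = (S * diagonal t⁻¹ * S) x y / (t z * S z z) := by
  have hSTS := congr_fun (congr_fun h.STS_eq z)
  simp only [coe_diagonalUnit, coe_diagonalUnit_inv, mul_diagonal_mul_apply, diagonal_mul,
    mul_diagonal, Pi.inv_apply] at hSTS
  calc ∑ σ, S σ z / S z z * t σ * ∑ s, S x s * S σ s * S y s / S z s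
      = ∑ s, S x s * S y s / (S z s * S z z) * ∑ σ, S z σ * t σ * S σ s := by
        simp only [mul_sum]
        rw [sum_comm]
        refine sum_congr rfl fun s _ => sum_congr rfl fun σ _ => ?_
        rw [hS.apply σ z]
        field_simp
    _ = ∑ s, S x s * (t s)⁻¹ * S s y / (t z * S z z) := by
        refine sum_congr rfl fun s _ => ?_
        rw [hSTS s, hS.apply s y]
        field_simp [hSz s, hSz z, ht z]
    _ = (S * diagonal t⁻¹ * S) x y / (t z * S z z) := by
        rw [mul_diagonal_mul_apply, sum_div]
        rfl

theorem STinvS_apply_of_involutive (h : ModularRelations S (diagonalUnit t ht : Matrix ι ι K) C)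
    {c : ι → ι} (hc : Function.Involutive c) (hC : ∀ l m, C l m = if l = c m then 1 else 0)
    (b a : ι) : (S * diagonal t⁻¹ * S) (c b) a = t b * S b a * t a := by
  have h' := congr_fun (congr_fun h.C_mul_STinvS_eq b) a
  simp only [coe_diagonalUnit, coe_diagonalUnit_inv, mul_apply_of_involutive hc hC,
    diagonal_mul, mul_diagonal] at h'
  exact h'

end Matrix

theorem stmt_13_general {ι : Type*} [Fintype ι] [DecidableEq ι] (z : ι)
    (cstar : ι → ι) (hinv : Function.Involutive cstar)
    (S T C : Matrix ι ι ℂ)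
    (hC : ∀ l m, C l m = if l = cstar m then 1 else 0)
    (hsym : S.IsSymm)
    (hmod1 : (S * T) ^ 3 = C) (hmod2 : S * S = C)
    (hdiag : ∀ l m, l ≠ m → T l m = 0)
    (hTnz : ∀ l, T l l ≠ 0) (hSz : ∀ s, S z s ≠ 0)
    (N : ι → ι → ι → ℂ)
    (hN : ∀ l m n, N l m n = ∑ s, S l s * S m s * S n s / S z s)
    (Nup : ι → ι → ι → ℂ)
    (hNup : ∀ l m n, Nup l m n = N (cstar l) m n) :
    ∀ lam mu nu : ι,
      ∑ s0, ∑ s1, ∑ s2, ∑ s3,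
        (S s1 z / S z z) * (S s2 z / S z z) * (S s3 z / S z z) *
          (S s0 z / S z z)⁻¹ *
          (Nup s0 s1 lam * Nup s0 s2 mu * Nup s0 s3 nu) *
          (T s1 s1 * T s2 s2 * T s3 s3 * ((T s0 s0)⁻¹) ^ 3)
        = T lam lam * T mu mu * T nu nu / ((T z z) ^ 3 * (S z z) ^ 2) *
            N lam mu nu := by
  intro lam mu nu
  obtain ⟨t, rfl⟩ : ∃ t, T = diagonal t := ⟨T.diag, (IsDiag.diagonal_diag hdiag).symm⟩
  have ht : ∀ i, t i ≠ 0 := by simpa using hTnz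
  have hmod : ModularRelations S (diagonalUnit t ht : Matrix ι ι ℂ) C :=
    ⟨hmod2, hmod1, mul_self_of_involutive hinv hC⟩
  have key : ∀ a b, ∑ σ, S σ z / S z z * t σ * N (cstar b) σ a
      = t b * S b a * t a / (t z * S z z) := fun a b => by
    simp only [hN]
    rw [sum_qdim_mul_twist_mul_verlinde_eq hmod hsym z hSz,
      STinvS_apply_of_involutive hmod hinv hC]
  simp only [hNup, diagonal_apply_eq]
  calc _ = ∑ s0, (S s0 z / S z z)⁻¹ * ((t s0)⁻¹) ^ 3 *
        ((∑ s1, S s1 z / S z z * t s1 * N (cstar s0) s1 lam) *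
          ((∑ s2, S s2 z / S z z * t s2 * N (cstar s0) s2 mu) *
            (∑ s3, S s3 z / S z z * t s3 * N (cstar s0) s3 nu))) := by
        refine sum_congr rfl fun s0 _ => ?_
        rw [sum_mul_sum, sum_mul_sum]
        simp only [mul_sum]
        refine sum_congr rfl fun s1 _ => sum_congr rfl fun s2 _ =>
          sum_congr rfl fun s3 _ => by ring
    _ = _ := by
        simp only [key]
        rw [hN, mul_sum]
        refine sum_congr rfl fun s0 _ => ?_
        simp only [hsym.apply s0]
        field_simp [hSz s0, hSz z, ht s0, ht z]

/-- Shadow state sum for three disjoint circles in `S² × S¹`, each colored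
`λ, μ, ν` and winding once around `S¹` (faces `Y₁,Y₂,Y₃` with `χ = gleam = 1`,
outer face `Y₀` with `χ = −1`, `gleam = −3`):
`∑_{σ₀σ₁σ₂σ₃} dim σ₁ dim σ₂ dim σ₃ (dim σ₀)⁻¹
   N^{σ₀}_{σ₁λ}N^{σ₀}_{σ₂μ}N^{σ₀}_{σ₃ν} T_{σ₁σ₁}T_{σ₂σ₂}T_{σ₃σ₃}T_{σ₀σ₀}^{-3}
 = (T_{λλ}T_{μμ}T_{νν}/(T_{00}³S_{00}²)) N_{λμν}`. -/
theorem stmt_13 {ι : Type*} [Fintype ι] [DecidableEq ι] (z : ι)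
    (cstar : ι → ι) (hinv : Function.Involutive cstar) (hzstar : cstar z = z)
    (S T C : Matrix ι ι ℂ)
    (hC : ∀ l m, C l m = if l = cstar m then 1 else 0)
    (hsym : S.IsSymm)
    (hmod1 : (S * T) ^ 3 = C) (hmod2 : S * S = C)
    (hdiag : ∀ l m, l ≠ m → T l m = 0)
    (hTnz : ∀ l, T l l ≠ 0) (hSz : ∀ s, S z s ≠ 0) (hSz' : ∀ s, S s z ≠ 0)
    (N : ι → ι → ι → ℂ)
    (hN : ∀ l m n, N l m n = ∑ s, S l s * S m s * S n s / S z s)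
    (Nup : ι → ι → ι → ℂ)
    (hNup : ∀ l m n, Nup l m n = N (cstar l) m n) :
    ∀ lam mu nu : ι,
      ∑ s0, ∑ s1, ∑ s2, ∑ s3,
        (S s1 z / S z z) * (S s2 z / S z z) * (S s3 z / S z z) *
          (S s0 z / S z z)⁻¹ *
          (Nup s0 s1 lam * Nup s0 s2 mu * Nup s0 s3 nu) *
          (T s1 s1 * T s2 s2 * T s3 s3 * ((T s0 s0)⁻¹) ^ 3)
        = T lam lam * T mu mu * T nu nu / ((T z z) ^ 3 * (S z z) ^ 2) *
            N lam mu nu :=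
  stmt_13_general z cstar hinv S T C hC hsym hmod1 hmod2 hdiag hTnz hSz N hN Nup hNup
end

section
/- Using S² = C and the symmetry of S, one has ∑_{λ₀∈Λ₊^k} S_{0λ₀}² = 1. Consequently, for the link of three vertical loops colored λ,μ,ν in S²×S¹, the normalized state sum (∑_{λ₀} (S_{λλ₀}/S_{0λ₀})(S_{μλ₀}/S_{0λ₀})(S_{νλ₀}/S_{0λ₀}) dim(λ₀)²) / (∑_{λ₀} dim(λ₀)²) equals N_{λμν}. -/
/-! Since `S` is symmetric, `∑ S_{0λ₀}²` is the `(0,0)` entry of `S² = C`, which is `1` because `0* = 0`.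
Writing `dim λ₀ = S_{0λ₀}/S_{00}`, every summand of the numerator equals `S_{λλ₀}S_{μλ₀}S_{νλ₀}/S_{0λ₀}`
divided by `S_{00}²`, and the denominator is `1/S_{00}²`. -/

theorem Matrix.IsSymm.mul_self_apply_self {ι R : Type*} [Fintype ι] [CommSemiring R]
    {S : Matrix ι ι R} (hS : S.IsSymm) (i : ι) : (S * S) i i = ∑ l, S i l ^ 2 := by
  rw [Matrix.mul_apply]
  exact Finset.sum_congr rfl fun l _ => by rw [sq, hS.apply i l]

theorem Finset.sum_div_mul_div_mul_div_mul_div_sq {ι K : Type*} [Fintype ι] [Field K]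
    (a b c w : ι → K) (hw : ∀ l, w l ≠ 0) (d : K) :
    ∑ l, (a l / w l) * (b l / w l) * (c l / w l) * (w l / d) ^ 2
      = (∑ l, a l * b l * c l / w l) / d ^ 2 := by
  rw [Finset.sum_div]
  refine Finset.sum_congr rfl fun l _ => ?_
  have := hw l
  field_simp

theorem stmt_15_general {ι : Type*} [Fintype ι] [DecidableEq ι] (z : ι)
    (cstar : ι → ι) (hzstar : cstar z = z)
    (S : Matrix ι ι ℂ) (hsym : S.IsSymm)
    (hSS : S * S = Matrix.of fun l m => if l = cstar m then 1 else 0)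
    (hz : ∀ s, S z s ≠ 0)
    (N : ι → ι → ι → ℂ)
    (hN : ∀ l m n, N l m n = ∑ s, S l s * S m s * S n s / S z s) :
    (∑ l, (S z l) ^ 2 = 1) ∧
      ∀ lam mu nu : ι,
        (∑ l, (S lam l / S z l) * (S mu l / S z l) * (S nu l / S z l) *
            (S l z / S z z) ^ 2) / (∑ l, (S l z / S z z) ^ 2)
          = N lam mu nu := by
  have hnorm : ∑ l, S z l ^ 2 = 1 := by
    rw [← hsym.mul_self_apply_self, hSS]
    simp [hzstar]
  refine ⟨hnorm, fun lam mu nu => ?_⟩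
  have hdim : ∀ l, S l z = S z l := fun l => hsym.apply z l
  have hden : ∑ l, (S z l / S z z) ^ 2 = 1 / S z z ^ 2 := by
    simp only [div_pow, ← Finset.sum_div, hnorm]
  simp only [hdim, Finset.sum_div_mul_div_mul_div_mul_div_sq _ _ _ _ hz, hden, ← hN]
  have := hz z
  field_simp

/-- Using `S² = C` and the symmetry of `S`, `∑_{λ₀} S_{0λ₀}² = 1`.
Consequently, for three vertical loops colored `λ,μ,ν` in `S²×S¹`, the
normalized state sum
`(∑_{λ₀}(S_{λλ₀}/S_{0λ₀})(S_{μλ₀}/S_{0λ₀})(S_{νλ₀}/S_{0λ₀}) dim(λ₀)²)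
  / (∑_{λ₀} dim(λ₀)²)` equals `N_{λμν}`. -/
theorem stmt_15 {ι : Type*} [Fintype ι] [DecidableEq ι] (z : ι)
    (cstar : ι → ι) (hinv : Function.Involutive cstar) (hzstar : cstar z = z)
    (S : Matrix ι ι ℂ) (hsym : S.IsSymm)
    (hSS : S * S = Matrix.of fun l m => if l = cstar m then 1 else 0)
    (hz : ∀ s, S z s ≠ 0)
    (N : ι → ι → ι → ℂ)
    (hN : ∀ l m n, N l m n = ∑ s, S l s * S m s * S n s / S z s) :
    (∑ l, (S z l) ^ 2 = 1) ∧
      ∀ lam mu nu : ι,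
        (∑ l, (S lam l / S z l) * (S mu l / S z l) * (S nu l / S z l) *
            (S l z / S z z) ^ 2) / (∑ l, (S l z / S z z) ^ 2)
          = N lam mu nu :=
  stmt_15_general z cstar hzstar S hsym hSS hz N hN
end
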